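/- Let ξ⋆ ∈ {ξ⋆^A, ξ⋆^B}, let ω ∈ {τ, conj(τ)}, and let φ : ℝ² → ℂ be continuously differentiable, ξ⋆-quasiperiodic, and satisfy φ(Rx) = ω·φ(x) for all x ∈ ℝ². Then ∫_𝕃 conj(φ(x))·∇φ(x) dx = 0 as a vector in ℂ²; equivalently, ⟨φ, D_x φ⟩_{L²(𝕃)} = 0 where D_x = (1/i)∇. -/

import Mathlib

open MeasureTheory

/-- The Euclidean inner product on `ℝ²`. -/
def dot2 (x y : ℝ × ℝ) : ℝ := x.1 * y.1 + x.2 * y.2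

/-- `f` is `ξ`-quasiperiodic with respect to the lattice `ℤv₁ + ℤv₂`. -/
def Quasiperiodic (v₁ v₂ ξ : ℝ × ℝ) (f : ℝ × ℝ → ℂ) : Prop :=
  ∀ (x : ℝ × ℝ) (m n : ℤ),
    f (x + ((m : ℝ) • v₁ + (n : ℝ) • v₂)) =
      Complex.exp (Complex.I * (dot2 ξ ((m : ℝ) • v₁ + (n : ℝ) • v₂) : ℂ)) * f x

/-- The fundamental cell `𝕃 = {s₁v₁ + s₂v₂ : s₁, s₂ ∈ [0,1)}`. -/
def cell (v₁ v₂ : ℝ × ℝ) : Set (ℝ × ℝ) :=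
  {x | ∃ s₁ s₂ : ℝ, s₁ ∈ Set.Ico (0 : ℝ) 1 ∧ s₂ ∈ Set.Ico (0 : ℝ) 1 ∧
    x = s₁ • v₁ + s₂ • v₂}

/-- Generator `v₁ = a(√3, 1)` of the equilateral lattice. -/
noncomputable def hex1 (a : ℝ) : ℝ × ℝ := (Real.sqrt 3 * a, a)

/-- Generator `v₂ = a(√3, −1)` of the equilateral lattice. -/
noncomputable def hex2 (a : ℝ) : ℝ × ℝ := (Real.sqrt 3 * a, -a)

/-- The rotation `R` by `2π/3`. -/
noncomputable def Rot (x : ℝ × ℝ) : ℝ × ℝ :=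
  ((-x.1 + Real.sqrt 3 * x.2) / 2, (-(Real.sqrt 3) * x.1 - x.2) / 2)

/-- `τ = e^{2πi/3}`. -/
noncomputable def tau3 : ℂ := Complex.exp (2 * Real.pi * Complex.I / 3)

open ComplexConjugate

/-!
Write `G e x = conj (φ x) * Dφ(x) e`. The multipliers of `φ` under lattice translations and
under `R` have modulus one, so `G e` is `Λ`-periodic and `G (R e) (R x) = G e x`. Since `R` preserves
Lebesgue measure and the lattice, `R⁻¹ 𝕃` is again a fundamental domain of `Λ`, and therefore
`∫_𝕃 G (R e) = ∫_𝕃 G e`. Finally `e + R e + R² e = 0` makes `G e + G (R e) + G (R² e)` vanish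
pointwise, whence `3 ∫_𝕃 G e = 0`.
-/

section General

variable {E : Type*} [NormedAddCommGroup E] [NormedSpace ℝ E]

theorem fderiv_apply_of_comp_affine_eq_mul {φ : E → ℂ} (hφ : Differentiable ℝ φ) (T : E →L[ℝ] E)
    (w : E) {c : ℂ} (hφc : ∀ x, φ (T x + w) = c * φ x) (x e : E) :
    fderiv ℝ φ (T x + w) (T e) = c * fderiv ℝ φ x e := by
  have hcomp : HasFDerivAt (fun y => φ (T y + w)) ((fderiv ℝ φ (T x + w)).comp T) x :=
    (hφ _).hasFDerivAt.comp x (T.hasFDerivAt.add_const w)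
  have hmul : HasFDerivAt (fun y => φ (T y + w)) (c • fderiv ℝ φ x) x := by
    simpa only [hφc] using (hφ x).hasFDerivAt.const_mul c
  exact congrArg (fun D : E →L[ℝ] ℂ => D e) (hcomp.unique hmul)

theorem conj_mul_fderiv_of_comp_affine_eq_mul {φ : E → ℂ} (hφ : Differentiable ℝ φ) (T : E →L[ℝ] E)
    (w : E) {c : ℂ} (hc : ‖c‖ = 1) (hφc : ∀ x, φ (T x + w) = c * φ x) (x e : E) :
    conj (φ (T x + w)) * fderiv ℝ φ (T x + w) (T e) = conj (φ x) * fderiv ℝ φ x e := by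
  rw [hφc, fderiv_apply_of_comp_affine_eq_mul hφ T w hφc, map_mul]
  calc conj c * conj (φ x) * (c * fderiv ℝ φ x e)
      = (conj c * c) * (conj (φ x) * fderiv ℝ φ x e) := by ring
    _ = conj (φ x) * fderiv ℝ φ x e := by rw [Complex.conj_mul', hc]; simp

variable [MeasurableSpace E] [BorelSpace E] {μ : Measure E} {L : AddSubgroup E} [Countable L]
  {s : Set E}

theorem MeasureTheory.IsAddFundamentalDomain.setIntegral_comp_continuousLinearEquiv
    [μ.IsAddLeftInvariant] {F : Type*} [NormedAddCommGroup F] [NormedSpace ℝ F]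
    (hs : IsAddFundamentalDomain L s μ) (T : E ≃L[ℝ] E) (hT : MeasurePreserving T μ μ)
    (hTL : ∀ x, T x ∈ L ↔ x ∈ L) {f : E → F} (hf : ∀ g ∈ L, ∀ x, f (g + x) = f x) :
    ∫ x in s, f (T x) ∂μ = ∫ x in s, f x ∂μ := by
  let e : L → L := fun g => ⟨T.symm g, by rw [← hTL, T.apply_symm_apply]; exact g.2⟩
  have he : Function.Bijective e := by
    refine ⟨fun g h hgh => Subtype.ext (T.symm.injective (congrArg Subtype.val hgh)), fun g => ?_⟩
    exact ⟨⟨T g, (hTL g).2 g.2⟩, Subtype.ext (T.symm_apply_apply g)⟩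
  have hTs : IsAddFundamentalDomain L (T ⁻¹' s) μ :=
    hs.preimage_of_equiv hT.quasiMeasurePreserving he fun g x => by
      simp [e, map_add, AddSubgroup.vadd_def]
  calc ∫ x in s, f (T x) ∂μ = ∫ x in T ⁻¹' s, f (T x) ∂μ :=
        hs.setIntegral_eq hTs fun g x => by
          simp only [AddSubgroup.vadd_def, vadd_eq_add, map_add]
          exact hf _ ((hTL g).2 g.2) _
    _ = ∫ x in s, f x ∂μ :=
        hT.setIntegral_preimage_emb T.toHomeomorph.measurableEmbedding f s

variable [FiniteDimensional ℝ E] [μ.IsAddHaarMeasure]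

theorem setIntegral_conj_mul_fderiv_eq_zero (hs : IsAddFundamentalDomain L s μ)
    (hs_bdd : Bornology.IsBounded s) (T : E ≃L[ℝ] E) (hT : MeasurePreserving T μ μ)
    (hTL : ∀ x, T x ∈ L ↔ x ∈ L) (hT3 : ∀ e, e + T e + T (T e) = 0)
    {φ : E → ℂ} (hφ : ContDiff ℝ 1 φ)
    (hφL : ∀ w ∈ L, ∃ c : ℂ, ‖c‖ = 1 ∧ ∀ x, φ (x + w) = c * φ x)
    {ω : ℂ} (hω : ‖ω‖ = 1) (hφT : ∀ x, φ (T x) = ω * φ x) (e : E) :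
    ∫ x in s, conj (φ x) * fderiv ℝ φ x e ∂μ = 0 := by
  set G : E → E → ℂ := fun e x => conj (φ x) * fderiv ℝ φ x e with hG
  have hdiff : Differentiable ℝ φ := hφ.differentiable one_ne_zero
  have hG_periodic : ∀ e, ∀ g ∈ L, ∀ x, G e (g + x) = G e x := fun e g hg x => by
    obtain ⟨c, hc, hφc⟩ := hφL g hg
    rw [add_comm]
    exact conj_mul_fderiv_of_comp_affine_eq_mul hdiff (.id ℝ E) g hc hφc x e
  have hG_rot : ∀ e x, G (T e) (T x) = G e x := fun e x => by
    simpa using conj_mul_fderiv_of_comp_affine_eq_mul hdiff (T : E →L[ℝ] E) 0 hω (by simpa using hφT) x e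
  have hG_int : ∀ e, IntegrableOn (G e) s μ := fun e =>
    ((hφ.continuous.star.mul ((hφ.continuous_fderiv one_ne_zero).clm_apply
      continuous_const)).continuousOn.integrableOn_compact hs_bdd.isCompact_closure).mono_set
      subset_closure
  have hG_inv : ∀ e, ∫ x in s, G (T e) x ∂μ = ∫ x in s, G e x ∂μ := fun e => by
    rw [← hs.setIntegral_comp_continuousLinearEquiv T hT hTL (hG_periodic (T e))]
    simp only [hG_rot]
  have hG_sum : ∀ x, G e x + G (T e) x + G (T (T e)) x = 0 := fun x => by
    simp only [hG, ← mul_add, ← map_add, hT3, map_zero, mul_zero]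
  have h3 : 3 * ∫ x in s, G e x ∂μ = 0 := by
    calc 3 * ∫ x in s, G e x ∂μ
        = (∫ x in s, G e x ∂μ) + (∫ x in s, G (T e) x ∂μ) + ∫ x in s, G (T (T e)) x ∂μ := by
          rw [hG_inv (T e), hG_inv e]; ring
      _ = ∫ x in s, (G e x + G (T e) x + G (T (T e)) x) ∂μ := by
          rw [← integral_add (hG_int _) (hG_int _),
            ← integral_add (f := fun x => G e x + G (T e) x) ((hG_int _).add (hG_int _)) (hG_int _)]
      _ = 0 := by simp only [hG_sum, integral_zero]
  simpa using h3

end General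

theorem cell_eq_fundamentalDomain (b : Module.Basis (Fin 2) ℝ (ℝ × ℝ)) :
    cell (b 0) (b 1) = ZSpan.fundamentalDomain b := by
  ext x
  simp only [cell, ZSpan.mem_fundamentalDomain, Fin.forall_fin_two]
  constructor
  · rintro ⟨s₁, s₂, hs₁, hs₂, rfl⟩
    simpa using ⟨hs₁, hs₂⟩
  · rintro ⟨h₀, h₁⟩
    refine ⟨_, _, h₀, h₁, ?_⟩
    rw [← Fin.sum_univ_two (fun i => b.repr x i • b i), b.sum_repr]

theorem Quasiperiodic.exists_norm_eq_one_of_mem_span {v₁ v₂ ξ : ℝ × ℝ} {f : ℝ × ℝ → ℂ}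
    (hf : Quasiperiodic v₁ v₂ ξ f) {w : ℝ × ℝ} (hw : w ∈ Submodule.span ℤ {v₁, v₂}) :
    ∃ c : ℂ, ‖c‖ = 1 ∧ ∀ x, f (x + w) = c * f x := by
  obtain ⟨m, n, rfl⟩ := Submodule.mem_span_pair.1 hw
  refine ⟨_, Complex.norm_exp_I_mul_ofReal (dot2 ξ ((m : ℝ) • v₁ + (n : ℝ) • v₂)), fun x => ?_⟩
  simpa only [Int.cast_smul_eq_zsmul] using hf x m n

theorem norm_tau3 : ‖tau3‖ = 1 := by
  rw [tau3, Complex.norm_exp]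
  simp

theorem sq_sqrt_three : Real.sqrt 3 ^ 2 = 3 := Real.sq_sqrt (by norm_num)

noncomputable def rotLinearMap : (ℝ × ℝ) →ₗ[ℝ] (ℝ × ℝ) where
  toFun := Rot
  map_add' x y := by simp only [Rot, Prod.fst_add, Prod.snd_add, Prod.mk_add_mk]; ext <;> ring
  map_smul' c x := by
    simp only [Rot, RingHom.id_apply]
    ext <;> simp only [Prod.smul_fst, Prod.smul_snd, smul_eq_mul, Prod.smul_mk] <;> ring

theorem Rot_Rot_Rot (x : ℝ × ℝ) : Rot (Rot (Rot x)) = x := by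
  simp only [Rot]
  ext <;> field_simp
  · linear_combination (3 * x.1 - Real.sqrt 3 * x.2) * sq_sqrt_three
  · linear_combination (Real.sqrt 3 * x.1 + 3 * x.2) * sq_sqrt_three

theorem add_Rot_add_Rot_Rot_eq_zero (x : ℝ × ℝ) : x + Rot x + Rot (Rot x) = 0 := by
  simp only [Rot]
  ext <;> simp only [Prod.fst_add, Prod.snd_add, Prod.fst_zero, Prod.snd_zero] <;> field_simp
  · linear_combination (-x.1) * sq_sqrt_three
  · linear_combination (-x.2) * sq_sqrt_three

noncomputable def rotCLE : (ℝ × ℝ) ≃L[ℝ] (ℝ × ℝ) :=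
  (LinearEquiv.ofLinearMap (f := rotLinearMap) (g := rotLinearMap ∘ₗ rotLinearMap)
    (LinearMap.ext Rot_Rot_Rot) (LinearMap.ext Rot_Rot_Rot)).toContinuousLinearEquiv

@[simp] theorem rotCLE_apply (x : ℝ × ℝ) : rotCLE x = Rot x := rfl

theorem det_rotLinearMap : LinearMap.det rotLinearMap = 1 := by
  rw [← LinearMap.det_toMatrix (Module.Basis.finTwoProd ℝ), Matrix.det_fin_two]
  norm_num [LinearMap.toMatrix_apply, rotLinearMap, Rot, div_mul_div_comm]

theorem measurePreserving_rotCLE : MeasurePreserving rotCLE volume volume := by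
  refine ⟨rotCLE.continuous.measurable, ?_⟩
  have h : Measure.map rotLinearMap volume = volume := by
    simpa [det_rotLinearMap] using Measure.map_linearMap_addHaar_eq_smul_addHaar volume
      (f := rotLinearMap) (by simp [det_rotLinearMap])
  exact h

theorem Rot_hex1 (a : ℝ) : Rot (hex1 a) = hex2 a - hex1 a := by
  simp only [Rot, hex1, hex2]
  ext
  · simp
  · simp only [Prod.snd_sub]
    linear_combination (-a / 2) * sq_sqrt_three

theorem Rot_hex2 (a : ℝ) : Rot (hex2 a) = -hex1 a := by
  simp only [Rot, hex1, hex2]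
  ext
  · simp
  · simp only [Prod.snd_neg]
    linear_combination (-a / 2) * sq_sqrt_three

theorem Rot_mem_span_hex (a : ℝ) {w : ℝ × ℝ} (hw : w ∈ Submodule.span ℤ {hex1 a, hex2 a}) :
    Rot w ∈ Submodule.span ℤ {hex1 a, hex2 a} := by
  obtain ⟨m, n, rfl⟩ := Submodule.mem_span_pair.1 hw
  refine Submodule.mem_span_pair.2 ⟨-m - n, m, ?_⟩
  rw [← rotCLE_apply, map_add, map_zsmul, map_zsmul, rotCLE_apply, rotCLE_apply, Rot_hex1, Rot_hex2]
  module

theorem Rot_mem_span_hex_iff (a : ℝ) (w : ℝ × ℝ) :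
    Rot w ∈ Submodule.span ℤ {hex1 a, hex2 a} ↔ w ∈ Submodule.span ℤ {hex1 a, hex2 a} :=
  ⟨fun hw => Rot_Rot_Rot w ▸ Rot_mem_span_hex a (Rot_mem_span_hex a hw), Rot_mem_span_hex a⟩

theorem linearIndependent_hex {a : ℝ} (ha : a ≠ 0) : LinearIndependent ℝ ![hex1 a, hex2 a] := by
  refine LinearIndependent.pair_iff.2 fun s t hst => ?_
  have h₁ := congrArg Prod.fst hst
  have h₂ := congrArg Prod.snd hst
  simp only [hex1, hex2, Prod.smul_mk, smul_eq_mul, Prod.mk_add_mk, Prod.fst_zero, Prod.snd_zero] at h₁ h₂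
  have hdiff : s - t = 0 :=
    (mul_eq_zero.1 (by linear_combination h₂ : (s - t) * a = 0)).resolve_right ha
  have hsum : s + t = 0 :=
    (mul_eq_zero.1 (by linear_combination h₁ : (s + t) * (Real.sqrt 3 * a) = 0)).resolve_right
      (mul_ne_zero (by positivity) ha)
  constructor <;> linarith

noncomputable def hexBasis {a : ℝ} (ha : a ≠ 0) : Module.Basis (Fin 2) ℝ (ℝ × ℝ) :=
  basisOfLinearIndependentOfCardEqFinrank (linearIndependent_hex ha) (by simp)

theorem range_hexBasis {a : ℝ} (ha : a ≠ 0) : Set.range (hexBasis ha) = {hex1 a, hex2 a} := by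
  simp [hexBasis, Set.pair_comm]

theorem stmt9_general (a : ℝ) (ha : 0 < a)
    (ξ : ℝ × ℝ)
    (ω : ℂ) (hω : ω = tau3 ∨ ω = (starRingEnd ℂ) tau3)
    (φ : ℝ × ℝ → ℂ) (hφC1 : ContDiff ℝ 1 φ)
    (hφqp : Quasiperiodic (hex1 a) (hex2 a) ξ φ)
    (hφrot : ∀ x, φ (Rot x) = ω * φ x) :
    (∫ x in cell (hex1 a) (hex2 a),
        (starRingEnd ℂ) (φ x) * fderiv ℝ φ x ((1 : ℝ), (0 : ℝ))) = 0 ∧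
    (∫ x in cell (hex1 a) (hex2 a),
        (starRingEnd ℂ) (φ x) * fderiv ℝ φ x ((0 : ℝ), (1 : ℝ))) = 0 := by
  set b := hexBasis ha.ne'
  have hL : Submodule.span ℤ (Set.range b) = Submodule.span ℤ {hex1 a, hex2 a} := by
    rw [range_hexBasis]
  have hcell : cell (hex1 a) (hex2 a) = ZSpan.fundamentalDomain b := by
    rw [← cell_eq_fundamentalDomain]
    simp [b, hexBasis]
  have : Countable (Submodule.span ℤ (Set.range b)).toAddSubgroup :=
    inferInstanceAs (Countable (Submodule.span ℤ (Set.range b)))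
  have hω_norm : ‖ω‖ = 1 := by rcases hω with rfl | rfl <;> simp [norm_tau3]
  have key := setIntegral_conj_mul_fderiv_eq_zero (ZSpan.isAddFundamentalDomain' b volume)
    (ZSpan.fundamentalDomain_isBounded b) rotCLE measurePreserving_rotCLE
    (by simpa [hL] using Rot_mem_span_hex_iff a) add_Rot_add_Rot_Rot_eq_zero hφC1
    (fun w hw => hφqp.exists_norm_eq_one_of_mem_span (by simpa [hL] using hw)) hω_norm hφrot
  rw [hcell]
  exact ⟨key _, key _⟩

/-- First part of Lemma 1i of the paper: `⟨φ, D_x φ⟩ = 0` for a rotation eigenfunction at a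
Dirac momentum. -/
theorem stmt9 (a : ℝ) (ha : 0 < a) (hdet : 2 * Real.sqrt 3 * a ^ 2 = 1)
    (k₁ k₂ : ℝ × ℝ)
    (hk11 : dot2 k₁ (hex1 a) = 1) (hk12 : dot2 k₁ (hex2 a) = 0)
    (hk21 : dot2 k₂ (hex1 a) = 0) (hk22 : dot2 k₂ (hex2 a) = 1)
    (ξ : ℝ × ℝ)
    (hξ : ξ = (2 * Real.pi / 3) • ((2 : ℝ) • k₁ + k₂) ∨
          ξ = (2 * Real.pi / 3) • (k₁ + (2 : ℝ) • k₂))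
    (ω : ℂ) (hω : ω = tau3 ∨ ω = (starRingEnd ℂ) tau3)
    (φ : ℝ × ℝ → ℂ) (hφC1 : ContDiff ℝ 1 φ)
    (hφqp : Quasiperiodic (hex1 a) (hex2 a) ξ φ)
    (hφrot : ∀ x, φ (Rot x) = ω * φ x) :
    (∫ x in cell (hex1 a) (hex2 a),
        (starRingEnd ℂ) (φ x) * fderiv ℝ φ x ((1 : ℝ), (0 : ℝ))) = 0 ∧
    (∫ x in cell (hex1 a) (hex2 a),
        (starRingEnd ℂ) (φ x) * fderiv ℝ φ x ((0 : ℝ), (1 : ℝ))) = 0 :=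
  stmt9_general a ha ξ ω hω φ hφC1 hφqp hφrot
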